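/- arXiv:2104.01866 — 5 statements merged into one kernel-verified Lean document; each statement's English description precedes it below -/
import Mathlib

section
/- For every real number t ≥ 0, the function t ↦ (sinh t / t) · e^{−t} is non-increasing on [0, ∞) (with the convention sinh t / t = 1 at t = 0); consequently, for all 0 ≤ t ≤ s one has sinh(s)/s ≤ (sinh(s−t)/(s−t)) · e^{t}. -/
open scoped BigOperators

noncomputable section

/-- ℓ¹-norm of an integer vector. -/
def l1 {n : ℕ} (k : Fin n → ℤ) : ℝ := ∑ i, |(k i : ℝ)|

/-- sinh x / x, extended by 1 at x = 0. -/
def sr (x : ℝ) : ℝ := if x = 0 then 1 else Real.sinh x / x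

/-- The weight w_k(t) = ∏ i, sinh (t k i) / (t k i). -/
def wt {n : ℕ} (t : ℝ) (k : Fin n → ℤ) : ℝ := ∏ i, sr (t * (k i : ℝ))

/-- Wiener (analytic) norm of a Fourier coefficient family. -/
def wiener {n : ℕ} (c : (Fin n → ℤ) → ℂ) (s : ℝ) : ℝ :=
  ∑' k, ‖c k‖ * Real.exp (s * l1 k)

/-- Strip-averaged L² norm of a Fourier coefficient family. -/
def stripL2 {n : ℕ} (c : (Fin n → ℤ) → ℂ) (s : ℝ) : ℝ :=
  Real.sqrt (∑' k, ‖c k‖ ^ 2 * wt (2 * s) k)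

/-!
For `t ≠ 0`, `(sinh t / t) e^{-t} = (1 - e^{-2t}) / (2t)` is the slope of `exp` between `-2t`
and `0`, while at `t = 0` the value `1` is the derivative of `exp` at `0`. So
`sr t * exp (-t) = dslope exp 0 (-2t)`, and the slopes of a convex function from a fixed point
increase with the other endpoint.
-/

open Set

theorem ConvexOn.monotoneOn_dslope {S : Set ℝ} {f : ℝ → ℝ} {a : ℝ} (hf : ConvexOn ℝ S f)
    (ha : a ∈ S) (hfa : DifferentiableAt ℝ f a) : MonotoneOn (dslope f a) S := by
  intro y hy z hz hyz
  rcases eq_or_ne y a with rfl | hya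
  · rcases eq_or_ne z y with rfl | hzy
    · exact le_rfl
    rw [dslope_same, dslope_of_ne f hzy]
    exact hf.deriv_le_slope hy hz (lt_of_le_of_ne hyz hzy.symm) hfa
  rcases eq_or_ne z a with rfl | hza
  · rw [dslope_same, dslope_of_ne f hya, slope_comm]
    exact hf.slope_le_deriv hy hz (lt_of_le_of_ne hyz hya) hfa
  rw [dslope_of_ne f hya, dslope_of_ne f hza]
  exact hf.slope_mono ha ⟨hy, hya⟩ ⟨hz, hza⟩ hyz

theorem sr_mul_exp_neg_eq_dslope (t : ℝ) :
    sr t * Real.exp (-t) = dslope Real.exp 0 (-2 * t) := by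
  rcases eq_or_ne t 0 with rfl | ht
  · simp [sr]
  rw [sr, if_neg ht, dslope_of_ne _ (by simpa using ht), slope_def_field, Real.sinh_eq]
  have hexp : Real.exp t * Real.exp (-t) = 1 := by
    rw [← Real.exp_add, add_neg_cancel, Real.exp_zero]
  have hexp2 : Real.exp (-2 * t) = Real.exp (-t) * Real.exp (-t) := by
    rw [← Real.exp_add]; ring_nf
  rw [hexp2, Real.exp_zero]
  field_simp
  linear_combination (-2 * t) * hexp

theorem antitoneOn_sr_mul_exp_neg : AntitoneOn (fun t : ℝ => sr t * Real.exp (-t)) (Ici 0) := by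
  intro a _ b _ hab
  simp only [sr_mul_exp_neg_eq_dslope]
  exact (convexOn_exp.monotoneOn_dslope (mem_univ 0) Real.differentiableAt_exp) (mem_univ _)
    (mem_univ _) (by linarith)

theorem sinh_ratio_monotone :
    (AntitoneOn (fun t : ℝ => sr t * Real.exp (-t)) (Set.Ici 0)) ∧
    (∀ s t : ℝ, 0 ≤ t → t ≤ s → sr s ≤ sr (s - t) * Real.exp t) := by
  refine ⟨antitoneOn_sr_mul_exp_neg, fun s t ht hts => ?_⟩
  have h := antitoneOn_sr_mul_exp_neg (sub_nonneg.2 hts) (ht.trans hts) (sub_le_self s ht)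
  calc sr s = sr s * Real.exp (-s) * Real.exp s := by rw [mul_assoc, ← Real.exp_add]; simp
    _ ≤ sr (s - t) * Real.exp (-(s - t)) * Real.exp s := by gcongr
    _ = sr (s - t) * Real.exp t := by rw [mul_assoc, ← Real.exp_add]; ring_nf
end
end

section
/- Define for k ∈ ℤⁿ and t ≥ 0 the weight w_k(t) = ∏_{i=1}^n sinh(t k_i)/(t k_i), with the convention sinh(x)/x = 1 at x = 0. Then for all k, l ∈ ℤⁿ and s ≥ 0, w_k(s) ≤ w_{k−l}(s) · e^{s|l|}, where |l| = |l₁| + ⋯ + |lₙ| is the ℓ¹-norm. -/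
open scoped BigOperators

noncomputable section

lemma cosh_le_cosh_mul_exp (x y : ℝ) :
    Real.cosh x ≤ Real.cosh y * Real.exp |x - y| := by
  have h1 : Real.cosh x = Real.cosh y * Real.cosh (x - y) + Real.sinh y * Real.sinh (x - y) := by
    rw [← Real.cosh_add]; ring_nf
  have h2 : Real.sinh y * Real.sinh (x - y) ≤ Real.cosh y * Real.sinh |x - y| := by
    calc Real.sinh y * Real.sinh (x - y) ≤ |Real.sinh y * Real.sinh (x - y)| := le_abs_self _
      _ = |Real.sinh y| * Real.sinh |x - y| := by rw [abs_mul, Real.abs_sinh (x - y)]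
      _ ≤ Real.cosh y * Real.sinh |x - y| := by
          have h3 : (0:ℝ) ≤ Real.sinh |x - y| := Real.sinh_nonneg_iff.mpr (abs_nonneg _)
          have h4 : |Real.sinh y| ≤ Real.cosh y := by
            rw [abs_le]
            constructor
            · have := Real.sinh_lt_cosh (x := -y)
              rw [Real.sinh_neg, Real.cosh_neg] at this; linarith
            · exact (Real.sinh_lt_cosh (x := y)).le
          exact mul_le_mul_of_nonneg_right h4 h3
  calc Real.cosh x = Real.cosh y * Real.cosh (x - y) + Real.sinh y * Real.sinh (x - y) := h1
    _ ≤ Real.cosh y * Real.cosh |x - y| + Real.cosh y * Real.sinh |x - y| := by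
        rw [Real.cosh_abs]; gcongr
    _ = Real.cosh y * Real.exp |x - y| := by rw [← Real.cosh_add_sinh]; ring

lemma sr_eq_integral (a : ℝ) : sr a = ∫ u in (0:ℝ)..1, Real.cosh (a * u) := by
  by_cases ha : a = 0
  · simp [sr, ha]
  · rw [sr, if_neg ha, intervalIntegral.integral_comp_mul_left _ ha]
    have : (∫ x in (0:ℝ)..a, Real.cosh x) = Real.sinh a - Real.sinh 0 :=
      intervalIntegral.integral_deriv_eq_sub' _ Real.deriv_sinh
        (fun x _ => Real.differentiable_sinh.differentiableAt)
        (Real.continuous_cosh.continuousOn)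
    simp [this, div_eq_inv_mul]

lemma sr_le (a b : ℝ) : sr a ≤ sr b * Real.exp |a - b| := by
  rw [sr_eq_integral, sr_eq_integral, ← intervalIntegral.integral_mul_const]
  apply intervalIntegral.integral_mono_on zero_le_one
  · exact (Real.continuous_cosh.comp (continuous_const.mul continuous_id)).intervalIntegrable _ _
  · exact ((Real.continuous_cosh.comp (continuous_const.mul continuous_id)).mul
      continuous_const).intervalIntegrable _ _
  · intro u hu
    calc Real.cosh (a * u) ≤ Real.cosh (b * u) * Real.exp |a * u - b * u| :=
          cosh_le_cosh_mul_exp _ _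
      _ ≤ Real.cosh (b * u) * Real.exp |a - b| := by
          have habs : |a * u - b * u| ≤ |a - b| := by
            rw [← sub_mul, abs_mul]
            calc |a - b| * |u| ≤ |a - b| * 1 := by
                  gcongr; rw [abs_of_nonneg hu.1]; exact hu.2
              _ = |a - b| := mul_one _
          exact mul_le_mul_of_nonneg_left (Real.exp_le_exp.mpr habs) ((Real.cosh_pos _).le)

lemma sr_nonneg (a : ℝ) : 0 ≤ sr a := by
  rw [sr_eq_integral]
  apply intervalIntegral.integral_nonneg zero_le_one
  intro u _; exact ((Real.cosh_pos _).le)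

theorem weight_submultiplicative (n : ℕ) (k l : Fin n → ℤ) (s : ℝ) (hs : 0 ≤ s) :
    wt s k ≤ wt s (k - l) * Real.exp (s * l1 l) := by
  unfold wt l1
  rw [Finset.mul_sum, Real.exp_sum, ← Finset.prod_mul_distrib]
  apply Finset.prod_le_prod (fun i _ => sr_nonneg _)
  intro i _
  have := sr_le (s * (k i : ℝ)) (s * ((k - l) i : ℝ))
  refine this.trans (le_of_eq ?_)
  congr 1
  have : ((k - l) i : ℝ) = (k i : ℝ) - (l i : ℝ) := by push_cast [Pi.sub_apply]; ring
  rw [this]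
  rw [show s * (k i : ℝ) - s * ((k i : ℝ) - (l i : ℝ)) = s * (l i : ℝ) by ring,
    abs_mul, abs_of_nonneg hs]
end
end

section
/- With w_k(t) = ∏_{i=1}^n sinh(t k_i)/(t k_i) (convention sinh(x)/x = 1 at x = 0), for every 0 < α ≤ 1, s > 0, and k ∈ ℤⁿ, one has w_k(2αs)/w_k(2s) ≤ α^{−n} · e^{2(α−1)s|k|}, where |k| is the ℓ¹-norm of k. -/
open scoped BigOperators

noncomputable section

lemma sr_pos (x : ℝ) : 0 < sr x := by
  unfold sr
  rcases lt_trichotomy x 0 with h | h | h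
  · simp only [h.ne, if_false]
    exact div_pos_of_neg_of_neg (Real.sinh_neg_iff.mpr h) h
  · simp [h]
  · simp only [h.ne', if_false]
    exact div_pos (Real.sinh_pos_iff.mpr h) h

lemma sr_abs (x : ℝ) : sr x = sr |x| := by
  unfold sr
  rcases lt_trichotomy x 0 with h | h | h
  · rw [abs_of_neg h]
    simp only [h.ne, neg_eq_zero, if_false, Real.sinh_neg, neg_div_neg_eq]
  · simp [h]
  · rw [abs_of_pos h]

lemma sinh_key {α x : ℝ} (hα1 : α ≤ 1) (hx : 0 < x) :
    Real.sinh (α * x) ≤ Real.exp ((α - 1) * x) * Real.sinh x := by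
  have e1 : Real.exp ((α - 1) * x) * Real.exp x = Real.exp (α * x) := by
    rw [← Real.exp_add]; ring_nf
  have e2 : Real.exp ((α - 1) * x) * Real.exp (-x) = Real.exp ((α - 2) * x) := by
    rw [← Real.exp_add]; ring_nf
  have h1 : Real.exp ((α - 2) * x) ≤ Real.exp (-(α * x)) :=
    Real.exp_le_exp.mpr (by nlinarith)
  rw [Real.sinh_eq, Real.sinh_eq]
  nlinarith [Real.exp_pos x, Real.exp_pos (-x)]

lemma sr_ratio (α s : ℝ) (hα0 : 0 < α) (hα1 : α ≤ 1) (hs : 0 < s) (m : ℤ) :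
    sr (2 * α * s * (m : ℝ)) / sr (2 * s * (m : ℝ)) ≤
      α⁻¹ * Real.exp (2 * (α - 1) * s * |(m : ℝ)|) := by
  rcases eq_or_ne m 0 with rfl | hm
  · simp only [Int.cast_zero, mul_zero, abs_zero, Real.exp_zero, mul_one]
    unfold sr; norm_num
    exact (one_le_inv₀ hα0).mpr hα1
  · set x : ℝ := 2 * s * |(m : ℝ)| with hxdef
    have hm' : (m : ℝ) ≠ 0 := Int.cast_ne_zero.mpr hm
    have hx : 0 < x := by positivity
    have ha : |2 * α * s * (m : ℝ)| = α * x := by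
      rw [abs_mul, abs_of_pos (by positivity : (0:ℝ) < 2 * α * s)]; ring
    have hb : |2 * s * (m : ℝ)| = x := by
      rw [abs_mul, abs_of_pos (by positivity : (0:ℝ) < 2 * s)]
    rw [sr_abs (2 * α * s * (m : ℝ)), sr_abs (2 * s * (m : ℝ)), ha, hb]
    have hax : 0 < α * x := by positivity
    unfold sr
    rw [if_neg hax.ne', if_neg hx.ne']
    have hsh : 0 < Real.sinh x := Real.sinh_pos_iff.mpr hx
    have key := sinh_key hα1 hx
    have hexp : 2 * (α - 1) * s * |(m : ℝ)| = (α - 1) * x := by rw [hxdef]; ring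
    rw [hexp]
    rw [div_div_div_comm]
    have h2 : α * x / x = α := by field_simp
    rw [h2, div_eq_mul_inv _ α, mul_comm]
    apply mul_le_mul_of_nonneg_left _ (by positivity)
    rw [div_le_iff₀ hsh]
    exact key

theorem weight_ratio_bound (n : ℕ) (α s : ℝ) (hα0 : 0 < α) (hα1 : α ≤ 1) (hs : 0 < s)
    (k : Fin n → ℤ) :
    wt (2 * α * s) k / wt (2 * s) k ≤ α ^ (-(n : ℝ)) * Real.exp (2 * (α - 1) * s * l1 k) := by
  unfold wt
  rw [← Finset.prod_div_distrib]
  have hb : ∀ i ∈ Finset.univ, sr (2 * α * s * ((k i : ℝ))) / sr (2 * s * ((k i : ℝ))) ≤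
      α⁻¹ * Real.exp (2 * (α - 1) * s * |(k i : ℝ)|) := fun i _ =>
    sr_ratio α s hα0 hα1 hs (k i)
  have h0 : ∀ i ∈ Finset.univ, (0:ℝ) ≤ sr (2 * α * s * ((k i : ℝ))) / sr (2 * s * ((k i : ℝ))) :=
    fun i _ => le_of_lt (div_pos (sr_pos _) (sr_pos _))
  calc ∏ i, sr (2 * α * s * ((k i : ℝ))) / sr (2 * s * ((k i : ℝ)))
      ≤ ∏ i, α⁻¹ * Real.exp (2 * (α - 1) * s * |(k i : ℝ)|) :=
        Finset.prod_le_prod h0 hb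
    _ = α ^ (-(n : ℝ)) * Real.exp (2 * (α - 1) * s * l1 k) := by
        rw [Finset.prod_mul_distrib, Finset.prod_const, ← Real.exp_sum, ← Finset.mul_sum]
        have h1 : (α⁻¹ : ℝ) ^ (Finset.univ : Finset (Fin n)).card = α ^ (-(n : ℝ)) := by
          simp only [Finset.card_univ, Fintype.card_fin]
          rw [Real.rpow_neg hα0.le, Real.rpow_natCast, ← inv_pow]
        rw [h1]
        simp [l1]
end
end

section
/- Let ω ∈ ℝⁿ be a frequency vector and K ≥ 1 an integer, and suppose Ω := max_{0 < |k| ≤ K} |⟨k, ω⟩|^{−1} < ∞. Let f = ∑_{0 < |k| ≤ K} f_k e_k be a trigonometric polynomial of order K with zero mean. Then the unique zero-mean solution φ = Lf = ∑_{0<|k|≤K} (f_k/(i⟨k,ω⟩)) e_k of the equation ∂_ω φ = f satisfies ‖Lf‖_s ≤ 2^{n+1} e^{sK} Ω ⫴f⫴_s. -/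
open scoped BigOperators

noncomputable section

/-!
Cauchy–Schwarz bounds `‖Lf‖_s` by `⫴f⫴_s` (the weights `w_k(2s)` are at least `1`) times
`e^{sK} (∑_{0<|k|≤K} ⟨k,ω⟩⁻²)^{1/2}`. For the last sum (Rüssmann), sort the small divisors into
windows `[jΩ⁻¹, (j+1)Ω⁻¹)`: two lattice points in the same window differ by some `k` with
`|⟨k,ω⟩| < Ω⁻¹`, hence `|k| > K`, and a volume count of disjoint `ℓ¹`-balls allows at most `3ⁿ`
such points. The window `j` then contributes at most `3ⁿ Ω² / j²`, and summing over `j` and both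
signs gives `4 · 3ⁿ Ω² ≤ 4ⁿ⁺¹ Ω²`.
-/

open Finset MeasureTheory Metric Module
open scoped ENNReal

theorem card_mul_pow_le_of_le_dist {E ι : Type*} [NormedAddCommGroup E] [NormedSpace ℝ E]
    [FiniteDimensional ℝ E] {T : Finset ι} {p : ι → E} {R r : ℝ} (hr : 0 < r) (hR : 0 ≤ R)
    (hT : ∀ i ∈ T, ‖p i‖ ≤ R) (hsep : ∀ i ∈ T, ∀ j ∈ T, i ≠ j → 2 * r ≤ dist (p i) (p j)) :
    #T * r ^ finrank ℝ E ≤ (R + r) ^ finrank ℝ E := by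
  borelize E
  let μ : Measure E := Measure.addHaar
  have hdisj : (T : Set ι).PairwiseDisjoint fun i => ball (p i) r := fun i hi j hj hij =>
    ball_disjoint_ball (by linarith [hsep i hi j hj hij])
  have hsub : ⋃ i ∈ T, ball (p i) r ⊆ ball 0 (R + r) := Set.iUnion₂_subset fun i hi =>
    ball_subset_ball' (by rw [dist_zero_right]; linarith [hT i hi])
  have hvol : (#T : ℝ≥0∞) * ENNReal.ofReal (r ^ finrank ℝ E) * μ (ball 0 1) ≤
      ENNReal.ofReal ((R + r) ^ finrank ℝ E) * μ (ball 0 1) :=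
    calc (#T : ℝ≥0∞) * ENNReal.ofReal (r ^ finrank ℝ E) * μ (ball 0 1)
        = μ (⋃ i ∈ T, ball (p i) r) := by
          rw [measure_biUnion_finset hdisj fun i _ => measurableSet_ball]
          simp only [μ.addHaar_ball_of_pos _ hr, sum_const, nsmul_eq_mul, mul_assoc]
      _ ≤ μ (ball 0 (R + r)) := measure_mono hsub
      _ = ENNReal.ofReal ((R + r) ^ finrank ℝ E) * μ (ball 0 1) :=
          μ.addHaar_ball_of_pos _ (by linarith)
  have hcard := ENNReal.toReal_mono ENNReal.ofReal_ne_top <|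
    (ENNReal.mul_le_mul_iff_left (measure_ball_pos μ _ one_pos).ne' measure_ball_lt_top.ne).1 hvol
  rwa [ENNReal.toReal_mul, ENNReal.toReal_natCast, ENNReal.toReal_ofReal (by positivity),
    ENNReal.toReal_ofReal (by positivity)] at hcard

section Lattice

variable {n : ℕ}

theorem abs_le_l1 (k : Fin n → ℤ) (i : Fin n) : |(k i : ℝ)| ≤ l1 k :=
  single_le_sum (f := fun i => |(k i : ℝ)|) (fun _ _ => abs_nonneg _) (mem_univ i)

theorem l1_pos_of_ne_zero {k : Fin n → ℤ} (hk : k ≠ 0) : 0 < l1 k := by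
  obtain ⟨i, hi⟩ := Function.ne_iff.1 hk
  exact (abs_pos.2 (Int.cast_ne_zero.2 hi)).trans_le (abs_le_l1 k i)

def toL1 (k : Fin n → ℤ) : PiLp 1 (fun _ : Fin n => ℝ) := WithLp.toLp 1 fun i => (k i : ℝ)

theorem norm_toL1 (k : Fin n → ℤ) : ‖toL1 k‖ = l1 k := by
  simp [toL1, l1, PiLp.norm_eq_of_L1]

theorem toL1_sub (k k' : Fin n → ℤ) : toL1 k - toL1 k' = toL1 (k - k') := by
  ext i
  simp [toL1]

theorem card_le_three_pow_of_l1_separated {T : Finset (Fin n → ℤ)} {K : ℝ} (hK : 0 < K)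
    (hT : ∀ k ∈ T, l1 k ≤ K) (hsep : ∀ k ∈ T, ∀ k' ∈ T, k ≠ k' → K ≤ l1 (k - k')) :
    #T ≤ 3 ^ n := by
  have hpack := card_mul_pow_le_of_le_dist (p := toL1) (half_pos hK) hK.le
    (fun k hk => (norm_toL1 k).trans_le (hT k hk))
    (fun k hk k' hk' hne => by
      rw [dist_eq_norm, toL1_sub, norm_toL1]; linarith [hsep k hk k' hk' hne])
  have hdim : finrank ℝ (PiLp 1 fun _ : Fin n => ℝ) = n :=
    (WithLp.linearEquiv 1 ℝ (Fin n → ℝ)).finrank_eq.trans (finrank_fin_fun ℝ)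
  rw [hdim, show K + K / 2 = 3 * (K / 2) by ring, mul_pow] at hpack
  exact_mod_cast le_of_mul_le_mul_right hpack (by positivity)

def shell (n K : ℕ) : Finset (Fin n → ℤ) :=
  {k ∈ Fintype.piFinset fun _ => Icc (-(K : ℤ)) K | 0 < l1 k ∧ l1 k ≤ K}

theorem mem_shell {K : ℕ} {k : Fin n → ℤ} : k ∈ shell n K ↔ 0 < l1 k ∧ l1 k ≤ K := by
  refine ⟨fun hk => (mem_filter.1 hk).2, fun hk => mem_filter.2 ⟨?_, hk⟩⟩
  refine Fintype.mem_piFinset.2 fun i => mem_Icc.2 (abs_le.1 ?_)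
  exact_mod_cast (abs_le_l1 k i).trans hk.2

end Lattice

section Cluster

variable {ι : Type*} {A : Finset ι} {x : ι → ℝ} {δ : ℝ} {N : ℕ}

theorem sum_inv_sq_le_of_le (hδ : 0 < δ) (hx : ∀ k ∈ A, δ ≤ x k)
    (hN : ∀ B ⊆ A, (∀ k ∈ B, ∀ k' ∈ B, |x k - x k'| < δ) → #B ≤ N) :
    ∑ k ∈ A, (x k ^ 2)⁻¹ ≤ 2 * N / δ ^ 2 := by
  classical
  set j : ι → ℕ := fun k => ⌊x k / δ⌋₊
  have hj : ∀ k ∈ A, 1 ≤ j k ∧ (j k : ℝ) * δ ≤ x k := fun k hk =>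
    ⟨Nat.le_floor (by rw [Nat.cast_one, one_le_div hδ]; exact hx k hk),
      (le_div_iff₀ hδ).1 (Nat.floor_le (div_nonneg (hδ.le.trans (hx k hk)) hδ.le))⟩
  have hterm : ∀ k ∈ A, (x k ^ 2)⁻¹ ≤ ((j k : ℝ) ^ 2)⁻¹ / δ ^ 2 := fun k hk => by
    obtain ⟨hj1, hjx⟩ := hj k hk
    rw [div_eq_mul_inv, ← mul_inv, ← mul_pow]
    gcongr
  have hfiber : ∀ m, #{k ∈ A | j k = m} ≤ N := fun m => by
    refine hN _ (filter_subset _ _) fun k hk k' hk' => ?_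
    obtain ⟨hkA, rfl⟩ := mem_filter.1 hk
    obtain ⟨hk'A, hk'm⟩ := mem_filter.1 hk'
    have hlt : ∀ l, x l < (j l + 1) * δ := fun l => (div_lt_iff₀ hδ).1 (Nat.lt_floor_add_one _)
    have hk'lo := (hj k' hk'A).2
    have hk'hi := hlt k'
    rw [hk'm] at hk'lo hk'hi
    rw [abs_sub_lt_iff]
    constructor <;> linarith [hlt k, (hj k hkA).2]
  have himage : A.image j ⊆ Ioo 0 (A.sup j + 1) := fun m hm => by
    obtain ⟨k, hk, rfl⟩ := mem_image.1 hm
    exact mem_Ioo.2 ⟨(hj k hk).1, Nat.lt_succ_of_le (le_sup hk)⟩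
  calc ∑ k ∈ A, (x k ^ 2)⁻¹ ≤ ∑ k ∈ A, ((j k : ℝ) ^ 2)⁻¹ / δ ^ 2 := sum_le_sum hterm
    _ = ∑ m ∈ A.image j, #{k ∈ A | j k = m} • (((m : ℝ) ^ 2)⁻¹ / δ ^ 2) :=
        sum_comp (fun m : ℕ => ((m : ℝ) ^ 2)⁻¹ / δ ^ 2) j
    _ ≤ ∑ m ∈ A.image j, N * (((m : ℝ) ^ 2)⁻¹ / δ ^ 2) := sum_le_sum fun m _ => by
        rw [nsmul_eq_mul]; gcongr; exact_mod_cast hfiber m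
    _ ≤ ∑ m ∈ Ioo 0 (A.sup j + 1), N * (((m : ℝ) ^ 2)⁻¹ / δ ^ 2) :=
        sum_le_sum_of_subset_of_nonneg himage fun _ _ _ => by positivity
    _ = N / δ ^ 2 * ∑ m ∈ Ioo 0 (A.sup j + 1), ((m : ℝ) ^ 2)⁻¹ := by
        rw [mul_sum]; refine sum_congr rfl fun m _ => by ring
    _ ≤ N / δ ^ 2 * 2 := by
        gcongr; simpa using sum_Ioo_inv_sq_le (α := ℝ) 0 (A.sup j + 1)
    _ = 2 * N / δ ^ 2 := by ring

theorem sum_inv_sq_le_of_le_abs (hδ : 0 < δ) (hx : ∀ k ∈ A, δ ≤ |x k|)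
    (hN : ∀ B ⊆ A, (∀ k ∈ B, ∀ k' ∈ B, |x k - x k'| < δ) → #B ≤ N) :
    ∑ k ∈ A, (x k ^ 2)⁻¹ ≤ 4 * N / δ ^ 2 := by
  classical
  rw [← sum_filter_add_sum_filter_not A fun k => 0 < x k]
  have hpos := sum_inv_sq_le_of_le (A := {k ∈ A | 0 < x k}) hδ
    (fun k hk => by
      obtain ⟨hkA, hk⟩ := mem_filter.1 hk
      simpa [abs_of_pos hk] using hx k hkA)
    fun B hB => hN B (hB.trans (filter_subset _ _))
  have hneg := sum_inv_sq_le_of_le (A := {k ∈ A | ¬0 < x k}) (x := -x) hδ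
    (fun k hk => by
      obtain ⟨hkA, hk⟩ := mem_filter.1 hk
      simpa [abs_of_nonpos (not_lt.1 hk)] using hx k hkA)
    fun B hB hcl => hN B (hB.trans (filter_subset _ _)) fun k hk k' hk' => by
      simpa [neg_add_eq_sub, abs_sub_comm] using hcl k hk k' hk'
  simp only [Pi.neg_apply, neg_sq] at hneg
  calc _ ≤ 2 * N / δ ^ 2 + 2 * N / δ ^ 2 := add_le_add hpos hneg
    _ = 4 * N / δ ^ 2 := by ring

end Cluster

section SmallDivisors

variable {n : ℕ}

def smallDivisor (ω : Fin n → ℝ) (k : Fin n → ℤ) : ℝ := ∑ i, (k i : ℝ) * ω i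

theorem smallDivisor_sub (ω : Fin n → ℝ) (k k' : Fin n → ℤ) :
    smallDivisor ω (k - k') = smallDivisor ω k - smallDivisor ω k' := by
  simp [smallDivisor, sub_mul, sum_sub_distrib]

/-- Rüssmann's estimate: small divisors within `δ` of each other come from `ℓ¹`-separated
lattice points, and there are at most `3 ^ n` of those. -/
theorem sum_inv_sq_smallDivisor_le {K : ℕ} (hK : 0 < K) {ω : Fin n → ℝ} {δ : ℝ} (hδ : 0 < δ)
    (hω : ∀ k ∈ shell n K, δ ≤ |smallDivisor ω k|) :
    ∑ k ∈ shell n K, (smallDivisor ω k ^ 2)⁻¹ ≤ 4 * 3 ^ n / δ ^ 2 := by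
  have hsum := sum_inv_sq_le_of_le_abs (N := 3 ^ n) hδ hω fun B hB hcl =>
    card_le_three_pow_of_l1_separated (K := K) (Nat.cast_pos.2 hK)
      (fun k hk => (mem_shell.1 (hB hk)).2) fun k hk k' hk' hne => by
        by_contra! hle
        have hkk' : k - k' ∈ shell n K :=
          mem_shell.2 ⟨l1_pos_of_ne_zero (sub_ne_zero.2 hne), hle.le⟩
        have hfar := hω _ hkk'
        rw [smallDivisor_sub] at hfar
        linarith [hcl k hk k' hk']
  exact_mod_cast hsum

end SmallDivisors

theorem one_le_sr (x : ℝ) : 1 ≤ sr x := by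
  unfold sr
  split_ifs with hx
  · rfl
  rcases lt_or_gt_of_ne hx with hneg | hpos
  · exact (one_le_div_of_neg hneg).2 (Real.sinh_le_self_iff.2 hneg.le)
  · exact (one_le_div hpos).2 (Real.self_le_sinh_iff.2 hpos.le)

theorem one_le_wt {n : ℕ} (t : ℝ) (k : Fin n → ℤ) : 1 ≤ wt t k :=
  one_le_prod fun _ _ => one_le_sr _

theorem wiener_eq_sum {n : ℕ} {c : (Fin n → ℤ) → ℂ} {S : Finset (Fin n → ℤ)}
    (hc : ∀ k ∉ S, c k = 0) (s : ℝ) :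
    wiener c s = ∑ k ∈ S, ‖c k‖ * Real.exp (s * l1 k) :=
  tsum_eq_sum fun k hk => by simp [hc k hk]

theorem stripL2_eq_sqrt_sum {n : ℕ} {c : (Fin n → ℤ) → ℂ} {S : Finset (Fin n → ℤ)}
    (hc : ∀ k ∉ S, c k = 0) (s : ℝ) :
    stripL2 c s = √(∑ k ∈ S, ‖c k‖ ^ 2 * wt (2 * s) k) :=
  congrArg Real.sqrt (tsum_eq_sum fun k hk => by simp [hc k hk])

theorem sum_mul_le_sqrt_mul_sqrt_of_one_le {ι : Type*} (S : Finset ι) (a b w : ι → ℝ)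
    (hw : ∀ i ∈ S, 1 ≤ w i) :
    ∑ i ∈ S, a i * b i ≤ √(∑ i ∈ S, a i ^ 2 * w i) * √(∑ i ∈ S, b i ^ 2) := by
  refine (Real.sum_mul_le_sqrt_mul_sqrt S a b).trans ?_
  gcongr with _ hi
  exact le_mul_of_one_le_right (sq_nonneg _) (hw _ hi)

theorem sqrt_sum_sq_inv_smallDivisor_mul_exp_le {n K : ℕ} (hK : 0 < K) {s : ℝ} (hs : 0 ≤ s)
    {ω : Fin n → ℝ} {Ω : ℝ} (hΩ : 0 < Ω) (hω : ∀ k ∈ shell n K, Ω⁻¹ ≤ |smallDivisor ω k|) :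
    √(∑ k ∈ shell n K, (|smallDivisor ω k|⁻¹ * Real.exp (s * l1 k)) ^ 2)
      ≤ 2 ^ (n + 1) * Real.exp (s * K) * Ω := by
  rw [Real.sqrt_le_left (by positivity)]
  calc ∑ k ∈ shell n K, (|smallDivisor ω k|⁻¹ * Real.exp (s * l1 k)) ^ 2
      ≤ ∑ k ∈ shell n K, Real.exp (s * K) ^ 2 * (smallDivisor ω k ^ 2)⁻¹ :=
        sum_le_sum fun k hk => by
          rw [mul_pow, inv_pow, sq_abs, mul_comm]
          gcongr
          exact (mem_shell.1 hk).2
    _ ≤ Real.exp (s * K) ^ 2 * (4 * 3 ^ n / Ω⁻¹ ^ 2) := by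
        rw [← mul_sum]
        gcongr
        exact sum_inv_sq_smallDivisor_le hK (inv_pos.2 hΩ) hω
    _ = 4 * 3 ^ n * (Real.exp (s * K) * Ω) ^ 2 := by
        rw [inv_pow, div_inv_eq_mul]; ring
    _ ≤ 4 * 4 ^ n * (Real.exp (s * K) * Ω) ^ 2 := by gcongr; norm_num
    _ = (2 ^ (n + 1) * Real.exp (s * K) * Ω) ^ 2 := by
        rw [show (4 : ℝ) ^ n = (2 ^ n) ^ 2 by rw [← pow_mul, mul_comm, pow_mul]; norm_num]
        ring

theorem small_divisor_estimate (n K : ℕ) (hK : 1 ≤ K) (s : ℝ) (hs : 0 ≤ s)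
    (ω : Fin n → ℝ) (Ω : ℝ)
    (hres : ∀ k : Fin n → ℤ, 0 < l1 k → l1 k ≤ K → (∑ i, (k i : ℝ) * ω i) ≠ 0)
    (hΩ : ∀ k : Fin n → ℤ, 0 < l1 k → l1 k ≤ K → |∑ i, (k i : ℝ) * ω i|⁻¹ ≤ Ω)
    (c : (Fin n → ℤ) → ℂ)
    (hsupp : ∀ k, c k ≠ 0 → 0 < l1 k ∧ l1 k ≤ K) :
    wiener (fun k => if 0 < l1 k ∧ l1 k ≤ K then
        c k / (Complex.I * ((∑ i, (k i : ℝ) * ω i : ℝ) : ℂ)) else 0) s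
      ≤ (2 : ℝ) ^ (n + 1) * Real.exp (s * K) * Ω * stripL2 c s := by
  have hc : ∀ k ∉ shell n K, c k = 0 := fun k hk =>
    by_contra fun h => hk (mem_shell.2 (hsupp k h))
  rcases (shell n K).eq_empty_or_nonempty with hA | ⟨k₀, hk₀⟩
  · have : c = 0 := funext fun k => hc k (hA ▸ notMem_empty k)
    simp [this, wiener, stripL2]
  have hd : ∀ k ∈ shell n K, 0 < |smallDivisor ω k| := fun k hk =>
    abs_pos.2 (hres k (mem_shell.1 hk).1 (mem_shell.1 hk).2)
  have hΩ' : ∀ k ∈ shell n K, |smallDivisor ω k|⁻¹ ≤ Ω := fun k hk =>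
    hΩ k (mem_shell.1 hk).1 (mem_shell.1 hk).2
  have hΩpos : 0 < Ω := (inv_pos.2 (hd k₀ hk₀)).trans_le (hΩ' k₀ hk₀)
  rw [wiener_eq_sum (S := shell n K) (fun k hk => if_neg (mt mem_shell.2 hk)),
    stripL2_eq_sqrt_sum hc]
  calc _ = ∑ k ∈ shell n K, ‖c k‖ * (|smallDivisor ω k|⁻¹ * Real.exp (s * l1 k)) :=
        sum_congr rfl fun k hk => by
          rw [if_pos (mem_shell.1 hk), norm_div, norm_mul, Complex.norm_I, Complex.norm_real,
            Real.norm_eq_abs, one_mul, div_eq_mul_inv, mul_assoc]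
          rfl
    _ ≤ √(∑ k ∈ shell n K, ‖c k‖ ^ 2 * wt (2 * s) k) *
          √(∑ k ∈ shell n K, (|smallDivisor ω k|⁻¹ * Real.exp (s * l1 k)) ^ 2) :=
        sum_mul_le_sqrt_mul_sqrt_of_one_le _ _ _ _ fun k _ => one_le_wt _ _
    _ ≤ √(∑ k ∈ shell n K, ‖c k‖ ^ 2 * wt (2 * s) k) * (2 ^ (n + 1) * Real.exp (s * K) * Ω) := by
        gcongr
        exact sqrt_sum_sq_inv_smallDivisor_mul_exp_le hK hs hΩpos fun k hk =>
          inv_le_of_inv_le₀ (hd k hk) (hΩ' k hk)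
    _ = _ := mul_comm _ _
end
end

section
/- Let ω ∈ ℝⁿ be nonresonant up to order K, i.e. ⟨k,ω⟩ ≠ 0 for 0 < |k| ≤ K, and set Ω = max_{0<|k|≤K} |⟨k,ω⟩|^{−1}. Then ∑_{0 < |k| ≤ K} 1/⟨k, ω⟩² ≤ 2^{n+2} Ω². -/
open scoped BigOperators

noncomputable section

/-- partial sums of `∑ 1/m²` are at most `2 - 1/M`. -/
lemma russmann_aux_sum_sq : ∀ M : ℕ, 1 ≤ M →
    ∑ m ∈ Finset.Icc 1 M, (1 : ℝ) / (m : ℝ) ^ 2 ≤ 2 - 1 / (M : ℝ) := by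
  intro M
  induction M with
  | zero => intro h; omega
  | succ M ih =>
    intro _
    by_cases hM : 1 ≤ M
    · rw [Finset.sum_Icc_succ_top (by omega : 1 ≤ M + 1)]
      have h1 := ih hM
      have hMpos : (0 : ℝ) < (M : ℝ) := by exact_mod_cast hM
      have hM1pos : (0 : ℝ) < (M : ℝ) + 1 := by linarith
      have key : (1 : ℝ) / ((M : ℝ) + 1) ^ 2 + 1 / ((M : ℝ) + 1) ≤ 1 / (M : ℝ) := by
        rw [div_add_div _ _ (by positivity) (by positivity),
          div_le_div_iff₀ (by positivity) hMpos]
        nlinarith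
      push_cast
      linarith
    · have hM0 : M = 0 := by omega
      subst hM0
      norm_num

/-- Sum of `1/m²` over any finset of positive naturals is at most 2. -/
lemma russmann_aux_sum_sq' (J : Finset ℕ) (hJ : ∀ m ∈ J, 1 ≤ m) :
    ∑ m ∈ J, (1 : ℝ) / (m : ℝ) ^ 2 ≤ 2 := by
  rcases J.eq_empty_or_nonempty with h | h
  · simp [h]
  · have hsub : J ⊆ Finset.Icc 1 (J.max' h) := by
      intro m hm
      exact Finset.mem_Icc.mpr ⟨hJ m hm, Finset.le_max' J m hm⟩
    have h1 : 1 ≤ J.max' h := hJ _ (J.max'_mem h)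
    have hmono : ∑ m ∈ J, (1 : ℝ) / (m : ℝ) ^ 2
        ≤ ∑ m ∈ Finset.Icc 1 (J.max' h), (1 : ℝ) / (m : ℝ) ^ 2 :=
      Finset.sum_le_sum_of_subset_of_nonneg hsub (fun _ _ _ => by positivity)
    have h2 := russmann_aux_sum_sq (J.max' h) h1
    have h3 : (0:ℝ) ≤ 1 / (J.max' h : ℝ) := by positivity
    linarith

theorem russmann_estimate (n K : ℕ) (hK : 1 ≤ K) (ω : Fin n → ℝ) (Ω : ℝ)
    (hres : ∀ k : Fin n → ℤ, 0 < l1 k → l1 k ≤ K → (∑ i, (k i : ℝ) * ω i) ≠ 0)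
    (hΩ : ∀ k : Fin n → ℤ, 0 < l1 k → l1 k ≤ K → |∑ i, (k i : ℝ) * ω i|⁻¹ ≤ Ω) :
    (∑' k : {k : Fin n → ℤ // 0 < l1 k ∧ l1 k ≤ K}, ((∑ i, (k.1 i : ℝ) * ω i)⁻¹) ^ 2)
      ≤ (2 : ℝ) ^ (n + 2) * Ω ^ 2 := by
  classical
  set t : (Fin n → ℤ) → ℝ := fun k => ∑ i, (k i : ℝ) * ω i with ht
  set S := {k : Fin n → ℤ // 0 < l1 k ∧ l1 k ≤ K} with hS
  -- coordinates are bounded, so the index type is finite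
  have hcoord : ∀ (k : Fin n → ℤ), l1 k ≤ K → ∀ i, k i ∈ Set.Icc (-(K : ℤ)) (K : ℤ) := by
    intro k hk i
    have h1 : |(k i : ℝ)| ≤ l1 k := by
      unfold l1
      exact Finset.single_le_sum (f := fun j => |(k j : ℝ)|) (fun j _ => abs_nonneg _) (Finset.mem_univ i)
    have h2 : |(k i : ℝ)| ≤ (K : ℝ) := le_trans h1 hk
    have h3 : |k i| ≤ (K : ℤ) := by
      exact_mod_cast (by push_cast; exact h2 : (|k i| : ℝ) ≤ ((K : ℤ) : ℝ))
    exact Set.mem_Icc.mpr (abs_le.mp h3)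
  haveI : Finite (Set.Icc (-(K : ℤ)) (K : ℤ)) := (Set.finite_Icc _ _).to_subtype
  have hfin : Finite S := by
    apply Finite.of_injective
      (fun k : S => (fun i => (⟨k.1 i, hcoord k.1 k.2.2 i⟩ : Set.Icc (-(K : ℤ)) (K : ℤ))))
    intro a b hab
    apply Subtype.ext
    funext i
    exact congrArg Subtype.val (congrFun hab i)
  haveI : Fintype S := Fintype.ofFinite S
  rw [tsum_fintype]
  by_cases hne : Nonempty S
  swap
  · haveI : IsEmpty S := not_nonempty_iff.mp hne
    simp only [Finset.univ_eq_empty, Finset.sum_empty]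
    positivity
  -- Ω is positive
  obtain ⟨k₀⟩ := hne
  have hΩpos : 0 < Ω := by
    have h1 : t k₀.1 ≠ 0 := hres k₀.1 k₀.2.1 k₀.2.2
    have h2 : 0 < |t k₀.1|⁻¹ := by positivity
    exact lt_of_lt_of_le h2 (hΩ k₀.1 k₀.2.1 k₀.2.2)
  -- basic facts for each index
  have htne : ∀ k : S, t k.1 ≠ 0 := fun k => hres k.1 k.2.1 k.2.2
  have hone_le : ∀ k : S, (1 : ℝ) ≤ |t k.1| * Ω := by
    intro k
    have h1 : |t k.1|⁻¹ ≤ Ω := hΩ k.1 k.2.1 k.2.2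
    have h2 : 0 < |t k.1| := abs_pos.mpr (htne k)
    calc (1 : ℝ) = |t k.1| * |t k.1|⁻¹ := (mul_inv_cancel₀ h2.ne').symm
    _ ≤ |t k.1| * Ω := mul_le_mul_of_nonneg_left h1 h2.le
  -- the encoding
  set m : S → ℕ := fun k => ⌊|t k.1| * Ω⌋₊ with hm
  set enc : S → Bool × (Fin n → ZMod 2) × ℕ :=
    fun k => (if 0 ≤ t k.1 then true else false, fun j => ((k.1 j : ZMod 2)), m k) with henc
  have hm1 : ∀ k : S, 1 ≤ m k := by
    intro k
    exact Nat.le_floor (by exact_mod_cast hone_le k)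
  have hmle : ∀ k : S, (m k : ℝ) ≤ |t k.1| * Ω :=
    fun k => Nat.floor_le (mul_nonneg (abs_nonneg _) hΩpos.le)
  have hmlt : ∀ k : S, |t k.1| * Ω < (m k : ℝ) + 1 := fun k => Nat.lt_floor_add_one _
  -- injectivity of the encoding
  have hinj : ∀ a ∈ Finset.univ, ∀ b ∈ Finset.univ, enc a = enc b → a = b := by
    intro a _ b _ hab
    by_contra hne'
    have hne'' : a.1 ≠ b.1 := fun h => hne' (Subtype.ext h)
    have hsign := congrArg Prod.fst hab
    have hpar := congrArg (fun x : Bool × (Fin n → ZMod 2) × ℕ => x.2.1) hab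
    have hmeq := congrArg (fun x : Bool × (Fin n → ZMod 2) × ℕ => x.2.2) hab
    simp only [henc] at hsign hpar hmeq
    -- same sign
    have hsgn : (0 ≤ t a.1) ↔ (0 ≤ t b.1) := by
      by_cases h1 : 0 ≤ t a.1 <;> by_cases h2 : 0 ≤ t b.1 <;> simp [h1, h2] at hsign ⊢
    -- same floor of |t|·Ω: values in a window of width Ω⁻¹
    have hwin : |(|t a.1| - |t b.1|)| < Ω⁻¹ := by
      have h1 : (m a : ℝ) ≤ |t a.1| * Ω := hmle a
      have h2 : |t a.1| * Ω < (m a : ℝ) + 1 := hmlt a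
      have h3 : (m a : ℝ) ≤ |t b.1| * Ω := by rw [hmeq]; exact hmle b
      have h4 : |t b.1| * Ω < (m a : ℝ) + 1 := by rw [hmeq]; exact hmlt b
      have h5 : |(|t a.1| * Ω - |t b.1| * Ω)| < 1 := by
        rw [abs_lt]; constructor <;> nlinarith
      have h6 : |(|t a.1| - |t b.1|)| * Ω < 1 := by
        have e : |(|t a.1| - |t b.1|)| * Ω = |(|t a.1| - |t b.1|) * Ω| := by
          rw [abs_mul, abs_of_pos hΩpos]
        rw [e, show (|t a.1| - |t b.1|) * Ω = |t a.1| * Ω - |t b.1| * Ω from by ring]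
        exact h5
      rw [← one_div]
      exact (lt_div_iff₀ hΩpos).mpr h6
    have habs : |t a.1 - t b.1| < Ω⁻¹ := by
      by_cases h1 : 0 ≤ t a.1
      · have h2 : 0 ≤ t b.1 := hsgn.mp h1
        rwa [abs_of_nonneg h1, abs_of_nonneg h2] at hwin
      · have h2 : ¬ 0 ≤ t b.1 := fun h => h1 (hsgn.mpr h)
        push_neg at h1 h2
        rw [abs_of_neg h1, abs_of_neg h2,
          show -t a.1 - -t b.1 = -(t a.1 - t b.1) from by ring, abs_neg] at hwin
        exact hwin
    -- parity: the difference is twice an integer vector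
    have hdvd : ∀ j, (2 : ℤ) ∣ (a.1 j - b.1 j) := by
      intro j
      have h1 : ((a.1 j : ZMod 2)) = ((b.1 j : ZMod 2)) := congrFun hpar j
      have h2 : ((a.1 j - b.1 j : ℤ) : ZMod 2) = 0 := by push_cast [h1]; ring
      exact (ZMod.intCast_zmod_eq_zero_iff_dvd _ 2).mp h2
    set c : Fin n → ℤ := fun j => (a.1 j - b.1 j) / 2 with hc
    have hc2 : ∀ j, 2 * c j = a.1 j - b.1 j := fun j => Int.mul_ediv_cancel' (hdvd j)
    have hcR : ∀ j, (c j : ℝ) = ((a.1 j : ℝ) - (b.1 j : ℝ)) / 2 := by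
      intro j
      have h := congrArg (fun x : ℤ => (x : ℝ)) (hc2 j)
      push_cast at h
      linarith
    -- c is nonzero
    obtain ⟨j₀, hj₀⟩ := Function.ne_iff.mp hne''
    have hcj : c j₀ ≠ 0 := by
      intro h
      apply hj₀
      have h' := hc2 j₀
      rw [h] at h'
      omega
    have hcpos : 0 < l1 c := by
      unfold l1
      apply Finset.sum_pos' (fun i _ => abs_nonneg _)
      refine ⟨j₀, Finset.mem_univ _, ?_⟩
      rw [abs_pos]
      exact_mod_cast hcj
    have hcle : l1 c ≤ K := by
      have h1 : l1 c ≤ (l1 a.1 + l1 b.1) / 2 := by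
        unfold l1
        rw [← Finset.sum_add_distrib, Finset.sum_div]
        apply Finset.sum_le_sum
        intro i _
        calc |(c i : ℝ)| = |(a.1 i : ℝ) - (b.1 i : ℝ)| / 2 := by
              rw [hcR i, abs_div, abs_two]
        _ ≤ (|(a.1 i : ℝ)| + |(b.1 i : ℝ)|) / 2 := by
              gcongr
              exact abs_sub _ _
      have h2 := a.2.2
      have h3 := b.2.2
      linarith
    have htc : t c = (t a.1 - t b.1) / 2 := by
      simp only [ht]
      rw [← Finset.sum_sub_distrib, Finset.sum_div]
      apply Finset.sum_congr rfl
      intro i _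
      rw [hcR i]
      ring
    have htcne : t c ≠ 0 := hres c hcpos hcle
    have htcΩ : |t c|⁻¹ ≤ Ω := hΩ c hcpos hcle
    have h1 : 1 ≤ Ω * |t c| := by
      have h2 : 0 < |t c| := abs_pos.mpr htcne
      calc (1:ℝ) = |t c|⁻¹ * |t c| := (inv_mul_cancel₀ h2.ne').symm
      _ ≤ Ω * |t c| := mul_le_mul_of_nonneg_right htcΩ h2.le
    have hΔ : t a.1 - t b.1 = 2 * t c := by rw [htc]; ring
    have h2 : |t a.1 - t b.1| = 2 * |t c| := by
      rw [hΔ, abs_mul, abs_two]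
    have h3 := mul_lt_mul_of_pos_right habs hΩpos
    rw [inv_mul_cancel₀ hΩpos.ne', h2] at h3
    nlinarith
  -- termwise bound
  have hterm : ∀ k : S, ((t k.1)⁻¹) ^ 2 ≤ Ω ^ 2 * (1 / ((m k : ℝ)) ^ 2) := by
    intro k
    have h0 : (0:ℝ) < (m k : ℝ) := by exact_mod_cast hm1 k
    have h1 : (m k : ℝ) ≤ |t k.1| * Ω := hmle k
    have h2 : 0 < |t k.1| := abs_pos.mpr (htne k)
    have h3 : ((t k.1)⁻¹) ^ 2 = 1 / (t k.1) ^ 2 := by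
      rw [inv_pow]; exact (one_div _).symm
    have h2' : (0:ℝ) < (t k.1) ^ 2 := by rw [← sq_abs]; exact pow_pos h2 2
    rw [h3, mul_one_div, div_le_div_iff₀ h2' (by positivity)]
    calc 1 * ((m k : ℝ)) ^ 2 = ((m k : ℝ)) ^ 2 := one_mul _
    _ ≤ (|t k.1| * Ω) ^ 2 := pow_le_pow_left₀ h0.le h1 2
    _ = Ω ^ 2 * (t k.1) ^ 2 := by rw [mul_pow, sq_abs]; ring
  -- assemble
  set G : Bool × (Fin n → ZMod 2) × ℕ → ℝ := fun y => Ω ^ 2 * (1 / ((y.2.2 : ℝ)) ^ 2) with hG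
  set J : Finset ℕ := Finset.image (fun k : S => m k) Finset.univ with hJ
  have hJ1 : ∀ j ∈ J, 1 ≤ j := by
    intro j hj
    obtain ⟨k, _, rfl⟩ := Finset.mem_image.mp hj
    exact hm1 k
  calc ∑ k : S, ((t k.1)⁻¹) ^ 2
      ≤ ∑ k : S, G (enc k) := Finset.sum_le_sum (fun k _ => hterm k)
    _ = ∑ y ∈ Finset.image enc Finset.univ, G y := (Finset.sum_image hinj).symm
    _ ≤ ∑ y ∈ (Finset.univ : Finset Bool) ×ˢ
          ((Finset.univ : Finset (Fin n → ZMod 2)) ×ˢ J), G y := by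
        apply Finset.sum_le_sum_of_subset_of_nonneg
        · intro y hy
          obtain ⟨k, _, rfl⟩ := Finset.mem_image.mp hy
          simp only [Finset.mem_product, Finset.mem_univ, true_and]
          exact Finset.mem_image.mpr ⟨k, Finset.mem_univ _, rfl⟩
        · intro y _ _
          positivity
    _ = 2 * (2 ^ n * (Ω ^ 2 * ∑ j ∈ J, (1:ℝ) / (j : ℝ) ^ 2)) := by
        have hcard : Fintype.card (Fin n → ZMod 2) = 2 ^ n := by
          simp [Fintype.card_fun]
        simp only [Finset.sum_product, hG]
        simp only [← Finset.mul_sum]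
        simp only [Finset.sum_const, Finset.card_univ, smul_eq_mul,
          Fintype.card_bool, hcard]
        push_cast
        ring
    _ ≤ 2 * (2 ^ n * (Ω ^ 2 * 2)) := by
        have h := russmann_aux_sum_sq' J hJ1
        have h1 : Ω ^ 2 * ∑ j ∈ J, (1:ℝ) / (j : ℝ) ^ 2 ≤ Ω ^ 2 * 2 :=
          mul_le_mul_of_nonneg_left h (sq_nonneg _)
        have h2 : (0:ℝ) < 2 ^ n := by positivity
        nlinarith
    _ = (2 : ℝ) ^ (n + 2) * Ω ^ 2 := by
        rw [pow_add]
        ring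
end
end
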